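/- Fix an integer k ≥ 2 and define Z_k(x) := ∑_{q (k+1)-free, q ≥ 1/x} φ(x, q) · f_k(q)². Then Z_k(x) = ∑_{q̃ squarefree, q̃^k ≥ 1/x} f_k(q̃)² · ∑_{ℓ | q̃^(k-1)} φ(ℓx, q̃). -/

import Mathlib

/-! Every `(k+1)`-free `q` factors uniquely as `q = ℓ * q̃` with `q̃ = rad q` squarefree and
`ℓ ∣ q̃ ^ (k-1)`. Since `ℓ` has no prime factors outside `q̃`, this gives `f_k(q) = f_k(q̃)` and
`φ(x, ℓ q̃) = φ(ℓ x, q̃)`. The cut-offs `q ≥ 1/x` and `q̃ ^ k ≥ 1/x` only discard terms in which `φ`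
vanishes anyway (`ℓ q̃ ≤ q̃ ^ k`), so the identity is a reindexing of a series of nonnegative terms,
carried out in `ℝ≥0∞` so that no summability is needed. -/

open Finset Filter Asymptotics ArithmeticFunction Classical

/-- `q` is `k`-free: no `k`-th power of a prime divides `q`. -/
def KFree (k q : ℕ) : Prop := ∀ p : ℕ, p.Prime → ¬ p ^ k ∣ q

/-- The radical (squarefree kernel) of `q`. -/
def rad (q : ℕ) : ℕ := ∏ p ∈ q.primeFactors, p

/-- `f_k(q) = ∏_{p ∣ rad q} 1/(p^k - 1)`. -/
noncomputable def fk (k q : ℕ) : ℝ := ∏ p ∈ q.primeFactors, 1 / ((p : ℝ) ^ k - 1)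

/-- Two-parameter totient `φ(x,q) = #{1 ≤ m ≤ qx : gcd(m,q) = 1}`. -/
noncomputable def phi2 (x : ℝ) (q : ℕ) : ℕ :=
  ((Finset.Icc 1 ⌊(q : ℝ) * x⌋₊).filter fun m => Nat.gcd m q = 1).card


/-- `Z_k(x) = ∑_{q (k+1)-free, q ≥ 1/x} φ(x,q) f_k(q)²`. -/
noncomputable def Z (k : ℕ) (x : ℝ) : ℝ :=
  ∑' q : ℕ, if KFree (k + 1) q ∧ 1 / x ≤ (q : ℝ) then (phi2 x q : ℝ) * (fk k q) ^ 2 else 0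

open scoped ENNReal

lemma rad_eq_radical (q : ℕ) : rad q = UniqueFactorizationMonoid.radical q :=
  Nat.radical_eq_prod_primeFactors.symm

lemma rad_pos (q : ℕ) : 0 < rad q := rad_eq_radical q ▸ Nat.radical_pos q

lemma rad_dvd (q : ℕ) : rad q ∣ q := Nat.prod_primeFactors_dvd q

lemma rad_squarefree (q : ℕ) : Squarefree (rad q) :=
  rad_eq_radical q ▸ UniqueFactorizationMonoid.squarefree_radical

namespace KFree

variable {k q : ℕ}

lemma ne_zero (h : KFree (k + 1) q) : q ≠ 0 := by
  rintro rfl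
  exact h 2 Nat.prime_two (dvd_zero _)

lemma factorization_le (h : KFree (k + 1) q) (p : ℕ) : q.factorization p ≤ k := by
  by_contra! hlt
  have hp : p.Prime :=
    Nat.prime_of_mem_primeFactors (q.support_factorization ▸ Finsupp.mem_support_iff.2 (by omega))
  exact h p hp ((hp.pow_dvd_iff_le_factorization h.ne_zero).2 hlt)

lemma dvd_rad_pow (h : KFree (k + 1) q) : q ∣ rad q ^ k := by
  nth_rw 1 [Nat.prod_primeFactors_pow_factorization h.ne_zero]
  rw [rad, ← Finset.prod_pow]
  exact prod_dvd_prod_of_dvd _ _ fun p _ ↦ pow_dvd_pow p (h.factorization_le p)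

lemma div_rad_dvd_rad_pow (h : KFree (k + 1 + 1) q) : q / rad q ∣ rad q ^ k := by
  rw [Nat.div_dvd_iff_dvd_mul (rad_dvd q) (rad_pos q), ← pow_succ']
  exact h.dvd_rad_pow

end KFree

section DvdPow

variable {n q ℓ : ℕ}

lemma primeFactors_mul_of_dvd_pow (hq : q ≠ 0) (hℓ : ℓ ∣ q ^ n) :
    (ℓ * q).primeFactors = q.primeFactors := by
  rw [Nat.primeFactors_mul (ne_zero_of_dvd_ne_zero (pow_ne_zero n hq) hℓ) hq,
    Finset.union_eq_right]
  intro p hp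
  have hp' := Nat.prime_of_mem_primeFactors hp
  exact Nat.mem_primeFactors.2
    ⟨hp', hp'.dvd_of_dvd_pow ((Nat.dvd_of_mem_primeFactors hp).trans hℓ), hq⟩

lemma rad_mul_of_dvd_pow (hq : Squarefree q) (hℓ : ℓ ∣ q ^ n) : rad (ℓ * q) = q := by
  rw [rad, primeFactors_mul_of_dvd_pow hq.ne_zero hℓ, Nat.prod_primeFactors_of_squarefree hq]

lemma fk_mul_of_dvd_pow (k : ℕ) (hq : q ≠ 0) (hℓ : ℓ ∣ q ^ n) : fk k (ℓ * q) = fk k q := by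
  rw [fk, fk, primeFactors_mul_of_dvd_pow hq hℓ]

lemma kFree_mul_of_dvd_pow (hq : Squarefree q) (hℓ : ℓ ∣ q ^ n) : KFree (n + 1 + 1) (ℓ * q) := by
  intro p hp hdvd
  have hpow : p ^ (n + 1 + 1) ∣ q ^ (n + 1) :=
    hdvd.trans (pow_succ q n ▸ mul_dvd_mul_right hℓ q)
  rw [hp.pow_dvd_iff_le_factorization (pow_ne_zero _ hq.ne_zero), Nat.factorization_pow,
    Finsupp.smul_apply, smul_eq_mul] at hpow
  have := (Nat.squarefree_iff_factorization_le_one hq.ne_zero).1 hq p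
  nlinarith

lemma phi2_mul_of_dvd_pow (x : ℝ) (hℓ : ℓ ∣ q ^ n) : phi2 x (ℓ * q) = phi2 (ℓ * x) q := by
  rw [phi2, phi2, show ((ℓ * q : ℕ) : ℝ) * x = q * (ℓ * x) by push_cast; ring]
  congr 1
  refine Finset.filter_congr fun m _ ↦ ?_
  change Nat.Coprime m (ℓ * q) ↔ Nat.Coprime m q
  rw [Nat.coprime_mul_iff_right]
  exact ⟨And.right, fun h ↦ ⟨(h.pow_right n).coprime_dvd_right hℓ, h⟩⟩

end DvdPow

lemma phi2_eq_zero_of_mul_lt_one {x : ℝ} {q : ℕ} (h : (q : ℝ) * x < 1) : phi2 x q = 0 := by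
  simp [phi2, Nat.floor_eq_zero.2 h]

def kFreeEquivSquarefreeDvdPow (n : ℕ) :
    {q : ℕ // KFree (n + 1 + 1) q} ≃ {p : ℕ × ℕ // Squarefree p.1 ∧ p.2 ∣ p.1 ^ n} where
  toFun q := ⟨(rad q, q / rad q), rad_squarefree q, q.2.div_rad_dvd_rad_pow⟩
  invFun p := ⟨p.1.2 * p.1.1, kFree_mul_of_dvd_pow p.2.1 p.2.2⟩
  left_inv q := Subtype.ext (Nat.div_mul_cancel (rad_dvd q))
  right_inv := by
    rintro ⟨⟨q, ℓ⟩, hq, hℓ⟩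
    ext
    · exact rad_mul_of_dvd_pow hq hℓ
    · simp [rad_mul_of_dvd_pow hq hℓ, hq.ne_zero]

lemma tsum_ite_eq_tsum_subtype {α : Type*} (P : α → Prop) [DecidablePred P] (f : α → ℝ≥0∞) :
    ∑' a, (if P a then f a else 0) = ∑' a : {a // P a}, f a :=
  (tsum_congr fun a ↦ by simp [Set.indicator_apply]).trans (tsum_subtype {a | P a} f).symm

lemma ENNReal.tsum_kFree_eq_tsum_squarefree (n : ℕ) (g : ℕ → ℝ≥0∞) :
    ∑' q, (if KFree (n + 1 + 1) q then g q else 0) =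
      ∑' q, if Squarefree q then ∑ ℓ ∈ (q ^ n).divisors, g (ℓ * q) else 0 := by
  calc ∑' q, (if KFree (n + 1 + 1) q then g q else 0)
      = ∑' p : {p : ℕ × ℕ // Squarefree p.1 ∧ p.2 ∣ p.1 ^ n}, g (p.1.2 * p.1.1) := by
        rw [tsum_ite_eq_tsum_subtype]
        exact ((kFreeEquivSquarefreeDvdPow n).symm.tsum_eq _).symm
    _ = ∑' q, ∑' ℓ, if Squarefree q ∧ ℓ ∣ q ^ n then g (ℓ * q) else 0 :=
        (tsum_ite_eq_tsum_subtype (fun p : ℕ × ℕ ↦ Squarefree p.1 ∧ p.2 ∣ p.1 ^ n)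
          fun p ↦ g (p.2 * p.1)).symm.trans ENNReal.tsum_prod'
    _ = _ := by
        refine tsum_congr fun q ↦ ?_
        by_cases hq : Squarefree q
        · simp only [hq, true_and, if_true]
          have hq0 : q ^ n ≠ 0 := pow_ne_zero n hq.ne_zero
          refine (tsum_eq_sum (s := (q ^ n).divisors) fun ℓ hℓ ↦ ?_).trans
            (Finset.sum_congr rfl fun ℓ hℓ ↦ if_pos (Nat.dvd_of_mem_divisors hℓ))
          exact if_neg fun h ↦ hℓ (Nat.mem_divisors.2 ⟨h, hq0⟩)
        · simp [hq]

lemma tsum_eq_toReal_tsum_ofReal {α : Type*} {f : α → ℝ} (hf : ∀ a, 0 ≤ f a) :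
    ∑' a, f a = (∑' a, ENNReal.ofReal (f a)).toReal := by
  rw [ENNReal.tsum_toReal_eq fun _ ↦ ENNReal.ofReal_ne_top]
  exact tsum_congr fun a ↦ (ENNReal.toReal_ofReal (hf a)).symm

lemma tsum_kFree_eq_tsum_squarefree (n : ℕ) {g : ℕ → ℝ} (hg : ∀ q, 0 ≤ g q) :
    ∑' q, (if KFree (n + 1 + 1) q then g q else 0) =
      ∑' q, if Squarefree q then ∑ ℓ ∈ (q ^ n).divisors, g (ℓ * q) else 0 := by
  rw [tsum_eq_toReal_tsum_ofReal fun q ↦ ite_nonneg (hg q) le_rfl,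
    tsum_eq_toReal_tsum_ofReal fun q ↦ ite_nonneg (Finset.sum_nonneg fun ℓ _ ↦ hg _) le_rfl]
  simp only [apply_ite ENNReal.ofReal, ENNReal.ofReal_zero,
    ENNReal.ofReal_sum_of_nonneg fun ℓ _ ↦ hg _]
  rw [ENNReal.tsum_kFree_eq_tsum_squarefree]

lemma mul_lt_one_of_lt_one_div {x y : ℝ} (hy : 0 ≤ y) (h : y < 1 / x) : y * x < 1 :=
  (lt_div_iff₀ (one_div_pos.1 (hy.trans_lt h))).1 h

lemma Z_eq_tsum_kFree (k : ℕ) (x : ℝ) :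
    Z k x = ∑' q, if KFree (k + 1) q then (phi2 x q : ℝ) * fk k q ^ 2 else 0 := by
  refine tsum_congr fun q ↦ ?_
  by_cases h : 1 / x ≤ q
  · simp only [h, and_true]
  · rw [phi2_eq_zero_of_mul_lt_one (mul_lt_one_of_lt_one_div q.cast_nonneg (not_le.1 h))]
    simp

lemma phi2_mul_eq_zero_of_pow_succ_lt {x : ℝ} {n q ℓ : ℕ} (hq : q ≠ 0) (hℓ : ℓ ∣ q ^ n)
    (h : (q : ℝ) ^ (n + 1) < 1 / x) : phi2 x (ℓ * q) = 0 := by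
  refine phi2_eq_zero_of_mul_lt_one (mul_lt_one_of_lt_one_div (Nat.cast_nonneg _) (h.trans_le' ?_))
  exact_mod_cast (Nat.le_of_dvd (by positivity) (pow_succ q n ▸ mul_dvd_mul_right hℓ q))

theorem stmt15_general (k : ℕ) (hk : 2 ≤ k) (x : ℝ) :
    Z k x = ∑' q : ℕ,
      if Squarefree q ∧ 1 / x ≤ ((q : ℝ)) ^ k then
        (fk k q) ^ 2 * ∑ ℓ ∈ (q ^ (k - 1)).divisors, (phi2 ((ℓ : ℝ) * x) q : ℝ)
      else 0 := by
  obtain ⟨n, rfl⟩ : ∃ n, k = n + 1 := ⟨k - 1, by omega⟩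
  rw [Z_eq_tsum_kFree, tsum_kFree_eq_tsum_squarefree n
    (g := fun q ↦ (phi2 x q : ℝ) * fk (n + 1) q ^ 2) fun q ↦ by positivity]
  refine tsum_congr fun q ↦ ?_
  by_cases hq : Squarefree q
  · by_cases hqx : 1 / x ≤ (q : ℝ) ^ (n + 1)
    · simp only [hq, hqx, and_self, if_true, Nat.add_sub_cancel, Finset.mul_sum]
      refine Finset.sum_congr rfl fun ℓ hℓ ↦ ?_
      have hℓ := Nat.dvd_of_mem_divisors hℓ
      rw [fk_mul_of_dvd_pow _ hq.ne_zero hℓ, phi2_mul_of_dvd_pow x hℓ, mul_comm]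
    · simp only [hq, hqx, and_false, if_false, if_true]
      refine Finset.sum_eq_zero fun ℓ hℓ ↦ ?_
      rw [phi2_mul_eq_zero_of_pow_succ_lt hq.ne_zero (Nat.dvd_of_mem_divisors hℓ) (not_le.1 hqx)]
      simp
  · simp [hq]

theorem stmt15 (k : ℕ) (hk : 2 ≤ k) (x : ℝ) (hx : 0 < x) :
    Z k x = ∑' q : ℕ,
      if Squarefree q ∧ 1 / x ≤ ((q : ℝ)) ^ k then
        (fk k q) ^ 2 * ∑ ℓ ∈ (q ^ (k - 1)).divisors, (phi2 ((ℓ : ℝ) * x) q : ℝ)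
      else 0 :=
  stmt15_general k hk x
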